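/- Suppose: (i) there is L > 0 such that for every t ∈ [0,1] and every dyadic step size h', the map x ↦ s(x, t, h') is L-Lipschitz; (ii) there is L_v ≥ 0 with L_v ≤ M such that for every t ∈ [0,1] the map x ↦ v(t, x) is L_v-Lipschitz and for every x ∈ ℝ^d the map t ↦ v(t, x) is L_v-Lipschitz; (iii) there is M_v ≥ 0 with ‖v(t, z_t)‖_{L²} ≤ M_v for every t ∈ {0, h₀, 2h₀, …, 1 − h₀}; (iv) flow-matching error: ‖s(z_t, t, h₀) − v(t, z_t)‖_{L²} ≤ ε_FM for every t ∈ {0, h₀, 2h₀, …, 1 − h₀}; (v) self-consistency error: for every dyadic step size h' ≤ 1/2 and every t ∈ {0, h', 2h', …, 1 − 2h'}, ‖s(z_t, t, h')/2 + s(z_t + h'·s(z_t, t, h'), t + h', h')/2 − s(z_t, t, 2h')‖_{L²} ≤ ε_SC. For each dyadic step size h define the shortcut sampling process ẑ^{(h)} by ẑ^{(h)}_0 := z_0 and ẑ^{(h)}_{t+h} := ẑ^{(h)}_t + h·s(ẑ^{(h)}_t, t, h) for t = 0, h, 2h, …, 1 − h. Then for every dyadic step size h, ‖ẑ^{(h)}_1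 − z_1‖_{L²} ≤ (1/L)·e^{3L/2}·((e·L_v/M)·(M_v + 1) + ε_FM + ε_SC·log₂ M). -/

import Mathlib

open MeasureTheory Set

open MeasureTheory Set

/-- The `L²` norm of a random vector: `‖X‖_{L²} = (E[‖X‖²])^{1/2}`. -/
noncomputable def L2norm {Ω : Type*} [MeasurableSpace Ω] (P : Measure Ω)
    {d : ℕ} (X : Ω → EuclideanSpace ℝ (Fin d)) : ℝ :=
  Real.sqrt (∫ ω, ‖X ω‖ ^ 2 ∂P)

section Aux

variable {Ω : Type*} [MeasurableSpace Ω] {P : Measure Ω} [IsProbabilityMeasure P] {d : ℕ}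

lemma L2norm_nonneg (X : Ω → EuclideanSpace ℝ (Fin d)) : 0 ≤ L2norm P X :=
  Real.sqrt_nonneg _

lemma L2norm_eq_toReal {X : Ω → EuclideanSpace ℝ (Fin d)} (hX : MemLp X 2 P) :
    L2norm P X = (eLpNorm X 2 P).toReal := by
  rw [hX.eLpNorm_eq_integral_rpow_norm (by norm_num) (by norm_num),
    ENNReal.toReal_ofReal (by positivity), L2norm, Real.sqrt_eq_rpow]
  norm_num

lemma eLpNorm_eq_ofReal_L2norm {X : Ω → EuclideanSpace ℝ (Fin d)} (hX : MemLp X 2 P) :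
    eLpNorm X 2 P = ENNReal.ofReal (L2norm P X) := by
  rw [L2norm_eq_toReal hX, ENNReal.ofReal_toReal hX.eLpNorm_ne_top]

lemma L2norm_le_dom {X Y : Ω → EuclideanSpace ℝ (Fin d)}
    (hX : AEStronglyMeasurable X P) (hY : MemLp Y 2 P)
    {a b : ℝ} (ha : 0 ≤ a) (hb : 0 ≤ b)
    (hdom : ∀ ω, ‖X ω‖ ≤ a + b * ‖Y ω‖) :
    MemLp X 2 P ∧ L2norm P X ≤ a + b * L2norm P Y := by
  have hg : MemLp (fun ω => a + b * ‖Y ω‖) 2 P :=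
    (memLp_const a).add (hY.norm.const_mul b)
  have hXm : MemLp X 2 P := by
    refine hg.of_le hX (Filter.Eventually.of_forall fun ω => ?_)
    refine (hdom ω).trans ?_
    exact le_abs_self _
  refine ⟨hXm, ?_⟩
  have hbd : 0 ≤ a + b * L2norm P Y :=
    add_nonneg ha (mul_nonneg hb (L2norm_nonneg Y))
  rw [L2norm_eq_toReal hXm]
  refine ENNReal.toReal_le_of_le_ofReal hbd ?_
  calc eLpNorm X 2 P ≤ eLpNorm (fun ω => a + b * ‖Y ω‖) 2 P := eLpNorm_mono_real hdom
    _ ≤ eLpNorm (fun _ : Ω => a) 2 P + eLpNorm (fun ω => b * ‖Y ω‖) 2 P := by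
        exact eLpNorm_add_le aestronglyMeasurable_const
          ((hY.norm.const_mul b).aestronglyMeasurable) (by norm_num)
    _ ≤ ENNReal.ofReal a + ENNReal.ofReal (b * L2norm P Y) := by
        gcongr
        · rw [eLpNorm_const a (by norm_num) (NeZero.ne P)]
          simp [measure_univ, ← Real.enorm_eq_ofReal ha]
        · have hfe : (fun ω => b * ‖Y ω‖) = b • (fun ω => ‖Y ω‖) := by
            funext ω; simp
          rw [hfe, eLpNorm_const_smul b (fun ω => ‖Y ω‖) 2 P, eLpNorm_norm,
            eLpNorm_eq_ofReal_L2norm hY, ENNReal.ofReal_mul hb,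
            ← Real.enorm_eq_ofReal hb]
    _ = ENNReal.ofReal (a + b * L2norm P Y) := by
        rw [ENNReal.ofReal_add ha (mul_nonneg hb (L2norm_nonneg Y))]

lemma L2norm_add_le {X Y : Ω → EuclideanSpace ℝ (Fin d)}
    (hX : MemLp X 2 P) (hY : MemLp Y 2 P) :
    L2norm P (fun ω => X ω + Y ω) ≤ L2norm P X + L2norm P Y := by
  have hXY : MemLp (fun ω => X ω + Y ω) 2 P := hX.add hY
  have hbd : 0 ≤ L2norm P X + L2norm P Y :=
    add_nonneg (L2norm_nonneg X) (L2norm_nonneg Y)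
  rw [L2norm_eq_toReal hXY]
  refine ENNReal.toReal_le_of_le_ofReal hbd ?_
  calc eLpNorm (fun ω => X ω + Y ω) 2 P ≤ eLpNorm X 2 P + eLpNorm Y 2 P :=
      eLpNorm_add_le hX.aestronglyMeasurable hY.aestronglyMeasurable (by norm_num)
    _ = ENNReal.ofReal (L2norm P X + L2norm P Y) := by
      rw [eLpNorm_eq_ofReal_L2norm hX, eLpNorm_eq_ofReal_L2norm hY,
        ENNReal.ofReal_add (L2norm_nonneg X) (L2norm_nonneg Y)]

lemma L2norm_smul (c : ℝ) (X : Ω → EuclideanSpace ℝ (Fin d)) :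
    L2norm P (fun ω => c • X ω) = |c| * L2norm P X := by
  unfold L2norm
  have : ∀ ω, ‖c • X ω‖ ^ 2 = c ^ 2 * ‖X ω‖ ^ 2 := by
    intro ω; rw [norm_smul]; rw [Real.norm_eq_abs]; rw [mul_pow, sq_abs]
  simp_rw [this, integral_const_mul]
  rw [Real.sqrt_mul (sq_nonneg c), Real.sqrt_sq_eq_abs]

lemma L2norm_zero : L2norm P (fun _ : Ω => (0 : EuclideanSpace ℝ (Fin d))) = 0 := by
  simp [L2norm]

end Aux

section Aux2
variable {Ω : Type*} [MeasurableSpace Ω] {P : Measure Ω} [IsProbabilityMeasure P] {d : ℕ}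

lemma L2norm_add4_le {X1 X2 X3 X4 : Ω → EuclideanSpace ℝ (Fin d)}
    (h1 : MemLp X1 2 P) (h2 : MemLp X2 2 P) (h3 : MemLp X3 2 P) (h4 : MemLp X4 2 P) :
    L2norm P (fun ω => X1 ω + X2 ω + X3 ω + X4 ω)
      ≤ L2norm P X1 + L2norm P X2 + L2norm P X3 + L2norm P X4 := by
  have m12 : MemLp (fun ω => X1 ω + X2 ω) 2 P := h1.add h2
  have m123 : MemLp (fun ω => X1 ω + X2 ω + X3 ω) 2 P := m12.add h3
  have t12 := L2norm_add_le h1 h2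
  have t123 := L2norm_add_le (X := fun ω => X1 ω + X2 ω) m12 h3
  have t := L2norm_add_le (X := fun ω => X1 ω + X2 ω + X3 ω) m123 h4
  linarith

end Aux2
lemma gronwallBound_le_aux {Kc e x : ℝ} (hK : 0 ≤ Kc) (he : 0 ≤ e) (hx : 0 ≤ x) :
    gronwallBound 0 Kc e x ≤ e * x * Real.exp (Kc * x) := by
  rcases eq_or_ne Kc 0 with h | h
  · subst h; simp [gronwallBound]
  · rw [gronwallBound_of_K_ne_0 h]
    have hKpos : 0 < Kc := lt_of_le_of_ne hK (Ne.symm h)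
    have hy : 0 ≤ Kc * x := mul_nonneg hK hx
    have h1 : Real.exp (-(Kc * x)) * Real.exp (Kc * x) = 1 := by
      rw [← Real.exp_add]; simp
    have h2 : Real.exp (Kc * x) - 1 ≤ (Kc * x) * Real.exp (Kc * x) := by
      nlinarith [Real.add_one_le_exp (-(Kc * x)), Real.exp_pos (Kc * x)]
    have h3 : e / Kc * (Real.exp (Kc * x) - 1) ≤ e / Kc * ((Kc * x) * Real.exp (Kc * x)) := by
      apply mul_le_mul_of_nonneg_left h2 (by positivity)
    calc 0 * Real.exp (Kc * x) + e / Kc * (Real.exp (Kc * x) - 1)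
      ≤ e / Kc * ((Kc * x) * Real.exp (Kc * x)) := by linarith
    _ = e * x * Real.exp (Kc * x) := by field_simp
set_option maxHeartbeats 1000000 in
/-- uniform bound over all dyadic step sizes `h = 2^n h₀`:
`‖ẑ^{(h)}_1 − z_1‖_{L²} ≤ (1/L) e^{3L/2} ((e L_v / M)(M_v+1) + ε_FM + ε_SC log₂ M)`,
where `M = 2^K` and `log₂ M = K`. -/
theorem stmt1 {d : ℕ} (hd : 1 ≤ d) {Ω : Type*} [MeasurableSpace Ω]
    (P : Measure Ω) [IsProbabilityMeasure P]
    (K : ℕ) (hK : 1 ≤ K) (h₀ : ℝ) (hh₀ : h₀ = 1 / 2 ^ K)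
    (v : ℝ → EuclideanSpace ℝ (Fin d) → EuclideanSpace ℝ (Fin d))
    (z : ℝ → Ω → EuclideanSpace ℝ (Fin d))
    (hzode : ∀ ω, ∀ t ∈ Icc (0 : ℝ) 1,
      HasDerivWithinAt (fun τ => z τ ω) (v t (z t ω)) (Icc (0 : ℝ) 1) t)
    (hzmem : ∀ t ∈ Icc (0 : ℝ) 1, MemLp (z t) 2 P)
    (s : EuclideanSpace ℝ (Fin d) → ℝ → ℝ → EuclideanSpace ℝ (Fin d))
    (L : ℝ) (hL : 0 < L)
    (hsLip : ∀ t ∈ Icc (0 : ℝ) 1, ∀ k ≤ K, ∀ x y : EuclideanSpace ℝ (Fin d),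
      ‖s x t (2 ^ k * h₀) - s y t (2 ^ k * h₀)‖ ≤ L * ‖x - y‖)
    (L_v : ℝ) (hLv : 0 ≤ L_v) (hLvM : L_v ≤ 2 ^ K)
    (hvLipx : ∀ t ∈ Icc (0 : ℝ) 1, ∀ x y : EuclideanSpace ℝ (Fin d),
      ‖v t x - v t y‖ ≤ L_v * ‖x - y‖)
    (hvLipt : ∀ x : EuclideanSpace ℝ (Fin d), ∀ t ∈ Icc (0 : ℝ) 1, ∀ t'' ∈ Icc (0 : ℝ) 1,
      ‖v t x - v t'' x‖ ≤ L_v * |t - t''|)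
    (M_v : ℝ) (hMv : 0 ≤ M_v)
    (hMvB : ∀ i : ℕ, i < 2 ^ K →
      L2norm P (fun ω => v (i * h₀) (z (i * h₀) ω)) ≤ M_v)
    (ε_FM : ℝ)
    (hFM : ∀ i : ℕ, i < 2 ^ K →
      L2norm P (fun ω =>
        s (z (i * h₀) ω) (i * h₀) h₀ - v (i * h₀) (z (i * h₀) ω)) ≤ ε_FM)
    (ε_SC : ℝ)
    (hSC : ∀ k : ℕ, k + 1 ≤ K → ∀ i : ℕ, (i + 2) * 2 ^ k ≤ 2 ^ K →
      L2norm P (fun ω =>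
        (1 / 2 : ℝ) • s (z (i * (2 ^ k * h₀)) ω) (i * (2 ^ k * h₀)) (2 ^ k * h₀)
        + (1 / 2 : ℝ) • s (z (i * (2 ^ k * h₀)) ω
              + (2 ^ k * h₀) • s (z (i * (2 ^ k * h₀)) ω) (i * (2 ^ k * h₀)) (2 ^ k * h₀))
            (i * (2 ^ k * h₀) + 2 ^ k * h₀) (2 ^ k * h₀)
        - s (z (i * (2 ^ k * h₀)) ω) (i * (2 ^ k * h₀)) (2 * (2 ^ k * h₀))) ≤ ε_SC) :
    ∀ n ≤ K, ∀ zhat : ℕ → Ω → EuclideanSpace ℝ (Fin d),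
      (∀ ω, zhat 0 ω = z 0 ω) →
      (∀ i : ℕ, i < 2 ^ (K - n) → ∀ ω,
        zhat (i + 1) ω
          = zhat i ω + (2 ^ n * h₀) • s (zhat i ω) (i * (2 ^ n * h₀)) (2 ^ n * h₀)) →
      L2norm P (fun ω => zhat (2 ^ (K - n)) ω - z 1 ω)
        ≤ (1 / L) * Real.exp (3 * L / 2)
          * (Real.exp 1 * L_v / 2 ^ K * (M_v + 1) + ε_FM + ε_SC * K) := by
  intro n hn zhat hz0 hrec
  have h2K : (0:ℝ) < 2 ^ K := by positivity
  have h0pos : 0 < h₀ := by rw [hh₀]; positivity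
  have hLvh₀ : L_v * h₀ ≤ 1 := by
    rw [hh₀]; rw [mul_one_div, div_le_one h2K]; exact hLvM
  have he1 : (1:ℝ) ≤ Real.exp 1 := by
    have := Real.add_one_le_exp 1; linarith
  -- grid points are in [0,1]
  have grid_mem : ∀ m : ℕ, m ≤ 2 ^ K → ((m : ℝ) * h₀ ∈ Icc (0:ℝ) 1) := by
    intro m hm
    constructor
    · positivity
    · rw [hh₀, mul_one_div, div_le_one h2K]
      calc (m:ℝ) ≤ ((2^K : ℕ) : ℝ) := Nat.cast_le.mpr hm
        _ = 2 ^ K := by push_cast; ring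
  have grid_mem' : ∀ (j k : ℕ), j * 2 ^ k ≤ 2 ^ K →
      ((j : ℝ) * ((2:ℝ) ^ k * h₀) ∈ Icc (0:ℝ) 1) := by
    intro j k hjk
    have he : (j:ℝ) * ((2:ℝ)^k * h₀) = ((j * 2^k : ℕ) : ℝ) * h₀ := by push_cast; ring
    rw [he]; exact grid_mem _ hjk
  -- continuity of s in x
  have scont : ∀ t ∈ Icc (0:ℝ) 1, ∀ k ≤ K,
      Continuous (fun x => s x t (2 ^ k * h₀)) := by
    intro t ht k hk
    have : LipschitzWith (Real.toNNReal L) (fun x => s x t (2 ^ k * h₀)) := by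
      apply LipschitzWith.of_dist_le_mul
      intro x y
      rw [dist_eq_norm, dist_eq_norm, Real.coe_toNNReal L hL.le]
      exact hsLip t ht k hk x y
    exact this.continuous
  -- MemLp of s-compositions
  have smem : ∀ t ∈ Icc (0:ℝ) 1, ∀ k ≤ K, ∀ W : Ω → EuclideanSpace ℝ (Fin d),
      MemLp W 2 P → MemLp (fun ω => s (W ω) t (2 ^ k * h₀)) 2 P := by
    intro t ht k hk W hW
    refine (L2norm_le_dom ((scont t ht k hk).comp_aestronglyMeasurable
      hW.aestronglyMeasurable) hW (norm_nonneg (s 0 t (2^k*h₀))) hL.le fun ω => ?_).1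
    have h1 : s (W ω) t (2^k*h₀) = s 0 t (2^k*h₀) + (s (W ω) t (2^k*h₀) - s 0 t (2^k*h₀)) := by
      abel
    rw [h1]
    refine (norm_add_le _ _).trans ?_
    have h2 := hsLip t ht k hk (W ω) 0
    rw [sub_zero] at h2
    linarith
  -- continuity of v in x
  have vcont : ∀ t ∈ Icc (0:ℝ) 1, Continuous (fun x => v t x) := by
    intro t ht
    have : LipschitzWith (Real.toNNReal L_v) (fun x => v t x) := by
      apply LipschitzWith.of_dist_le_mul
      intro x y
      rw [dist_eq_norm, dist_eq_norm, Real.coe_toNNReal L_v hLv]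
      exact hvLipx t ht x y
    exact this.continuous
  have vmem : ∀ t ∈ Icc (0:ℝ) 1, ∀ W : Ω → EuclideanSpace ℝ (Fin d),
      MemLp W 2 P → MemLp (fun ω => v t (W ω)) 2 P := by
    intro t ht W hW
    refine (L2norm_le_dom ((vcont t ht).comp_aestronglyMeasurable
      hW.aestronglyMeasurable) hW (norm_nonneg (v t 0)) hLv fun ω => ?_).1
    have h1 : v t (W ω) = v t 0 + (v t (W ω) - v t 0) := by abel
    rw [h1]
    refine (norm_add_le _ _).trans ?_
    have h2 := hvLipx t ht (W ω) 0
    rw [sub_zero] at h2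
    linarith
  -- nonnegativity of the error constants
  have hεFM : 0 ≤ ε_FM := le_trans (L2norm_nonneg _) (hFM 0 (by positivity))
  have hεSC : 0 ≤ ε_SC := by
    refine le_trans (L2norm_nonneg _) (hSC 0 hK 0 ?_)
    have h2 : (2:ℕ)^1 ≤ 2^K := Nat.pow_le_pow_right (by norm_num) hK
    simpa using h2
  set A : ℝ := Real.exp 1 * L_v * h₀ * (M_v + 1) + ε_FM with hAdef
  have hA0 : 0 ≤ A := by
    have : 0 ≤ Real.exp 1 * L_v * h₀ * (M_v + 1) := by positivity
    simp only [hAdef]; linarith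
  -- the recursive per-level error constant
  set a : ℕ → ℝ := fun m => Nat.rec A (fun k ak => (1 + L * (2^k * h₀) / 2) * ak + ε_SC) m
    with hadef
  have ha0 : a 0 = A := rfl
  have haS : ∀ k, a (k+1) = (1 + L * (2^k * h₀) / 2) * a k + ε_SC := fun k => rfl
  have haNN : ∀ k, 0 ≤ a k := by
    intro k
    induction k with
    | zero => exact hA0
    | succ k ih =>
      rw [haS]
      have h1 : (0:ℝ) ≤ 1 + L * (2^k * h₀) / 2 := by positivity
      nlinarith
  -- THE KEY CLAIM: local defect bound at every level
  have key : ∀ m, m ≤ K → ∀ j : ℕ, (j + 1) * 2 ^ m ≤ 2 ^ K →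
      MemLp (fun ω => z (((j:ℝ)+1)*((2:ℝ)^m*h₀)) ω - z ((j:ℝ)*((2:ℝ)^m*h₀)) ω
        - ((2:ℝ)^m*h₀) • s (z ((j:ℝ)*((2:ℝ)^m*h₀)) ω) ((j:ℝ)*((2:ℝ)^m*h₀)) ((2:ℝ)^m*h₀)) 2 P
      ∧ L2norm P (fun ω => z (((j:ℝ)+1)*((2:ℝ)^m*h₀)) ω - z ((j:ℝ)*((2:ℝ)^m*h₀)) ω
        - ((2:ℝ)^m*h₀) • s (z ((j:ℝ)*((2:ℝ)^m*h₀)) ω) ((j:ℝ)*((2:ℝ)^m*h₀)) ((2:ℝ)^m*h₀))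
        ≤ ((2:ℝ)^m*h₀) * a m := by
    intro m
    induction m with
    | zero =>
      intro _ j hj
      simp only [pow_zero, one_mul, mul_one] at hj ⊢
      have hjlt : j < 2 ^ K := by omega
      have htmem : (j:ℝ) * h₀ ∈ Icc (0:ℝ) 1 := grid_mem j (by omega)
      have ht'mem : (j:ℝ) * h₀ + h₀ ∈ Icc (0:ℝ) 1 := by
        have h1 := grid_mem (j+1) hj
        have he : ((j+1:ℕ):ℝ) * h₀ = (j:ℝ)*h₀ + h₀ := by push_cast; ring
        rwa [he] at h1
      have hte : ((j:ℝ)+1) * h₀ = (j:ℝ)*h₀ + h₀ := by ring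
      rw [hte]
      set tj := (j:ℝ) * h₀ with htj
      set a' : ℝ := L_v*h₀^2/2*(1+Real.exp 1*L_v*h₀) with ha'def
      set b' : ℝ := Real.exp 1*L_v*h₀^2/2 with hb'def
      have ha' : 0 ≤ a' := by
        rw [ha'def]
        have : (0:ℝ) ≤ 1+Real.exp 1*L_v*h₀ := by positivity
        positivity
      have hb' : 0 ≤ b' := by rw [hb'def]; positivity
      -- pointwise ODE analysis
      have hsub : Icc tj (tj + h₀) ⊆ Icc (0:ℝ) 1 := Icc_subset_Icc htmem.1 ht'mem.2
      have hUpt : ∀ ω, ‖z (tj + h₀) ω - z tj ω - h₀ • v tj (z tj ω)‖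
          ≤ a' + b' * ‖v tj (z tj ω)‖ := by
        intro ω
        have hεg0 : 0 ≤ ‖v tj (z tj ω)‖ + L_v * h₀ :=
          add_nonneg (norm_nonneg _) (mul_nonneg hLv h0pos.le)
        have hfc : ContinuousOn (fun τ => z τ ω) (Icc tj (tj+h₀)) := fun τ hτ =>
          ((hzode ω τ (hsub hτ)).continuousWithinAt).mono hsub
        have hder : ∀ τ ∈ Ico tj (tj+h₀),
            HasDerivWithinAt (fun σ => z σ ω) (v τ (z τ ω)) (Ici τ) τ := by
          intro τ hτ
          have hτmem : τ ∈ Icc (0:ℝ) 1 := hsub ⟨hτ.1, hτ.2.le⟩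
          have h1 : HasDerivWithinAt (fun σ => z σ ω) (v τ (z τ ω)) (Icc τ 1) τ :=
            (hzode ω τ hτmem).mono (Icc_subset_Icc hτmem.1 le_rfl)
          refine h1.mono_of_mem_nhdsWithin ?_
          have hτ1 : τ < 1 := lt_of_lt_of_le hτ.2 ht'mem.2
          rw [← Ici_inter_Iic]
          exact Filter.inter_mem self_mem_nhdsWithin (mem_nhdsWithin_of_mem_nhds (Iic_mem_nhds hτ1))
        have hgron : ∀ τ ∈ Icc tj (tj+h₀), ‖z τ ω - z tj ω‖
            ≤ gronwallBound 0 L_v (‖v tj (z tj ω)‖ + L_v * h₀) (τ - tj) := by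
          apply norm_le_gronwallBound_of_norm_deriv_right_le (f' := fun τ => v τ (z τ ω))
          · exact hfc.sub continuousOn_const
          · intro τ hτ; exact (hder τ hτ).sub_const _
          · simp
          · intro τ hτ
            have hτmem : τ ∈ Icc (0:ℝ) 1 := hsub ⟨hτ.1, hτ.2.le⟩
            have e1 := hvLipx τ hτmem (z τ ω) (z tj ω)
            have e2 := hvLipt (z tj ω) τ hτmem tj htmem
            have e3 : |τ - tj| ≤ h₀ := by
              rw [abs_of_nonneg (by linarith [hτ.1])]
              linarith [hτ.2]
            have e4 : ‖v τ (z τ ω)‖ ≤ ‖v τ (z τ ω) - v τ (z tj ω)‖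
                + ‖v τ (z tj ω) - v tj (z tj ω)‖ + ‖v tj (z tj ω)‖ := by
              calc ‖v τ (z τ ω)‖ = ‖(v τ (z τ ω) - v τ (z tj ω))
                  + (v τ (z tj ω) - v tj (z tj ω)) + v tj (z tj ω)‖ := by congr 1; abel
                _ ≤ _ := norm_add₃_le
            have e5 : L_v * |τ - tj| ≤ L_v * h₀ := mul_le_mul_of_nonneg_left e3 hLv
            show ‖v τ (z τ ω)‖ ≤ L_v * ‖z τ ω - z tj ω‖ + (‖v tj (z tj ω)‖ + L_v * h₀)
            linarith
        have hgron' : ∀ τ ∈ Icc tj (tj+h₀), ‖z τ ω - z tj ω‖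
            ≤ (‖v tj (z tj ω)‖ + L_v * h₀) * (τ - tj) * Real.exp 1 := by
          intro τ hτ
          refine (hgron τ hτ).trans ?_
          have hx : 0 ≤ τ - tj := by linarith [hτ.1]
          refine (gronwallBound_le_aux hLv hεg0 hx).trans ?_
          have hee : Real.exp (L_v * (τ - tj)) ≤ Real.exp 1 := by
            apply Real.exp_le_exp.mpr
            have hxh : τ - tj ≤ h₀ := by linarith [hτ.2]
            nlinarith
          exact mul_le_mul_of_nonneg_left hee (mul_nonneg hεg0 hx)
        have hC0 : 0 ≤ L_v * (1 + Real.exp 1 * (‖v tj (z tj ω)‖ + L_v * h₀)) := by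
          apply mul_nonneg hLv
          have := mul_nonneg (Real.exp_pos 1).le hεg0
          linarith
        have hu : ∀ τ ∈ Ico tj (tj+h₀), HasDerivWithinAt
            (fun σ => z σ ω - z tj ω - (σ - tj) • v tj (z tj ω))
            (v τ (z τ ω) - v tj (z tj ω)) (Ici τ) τ := by
          intro τ hτ
          have h2 : HasDerivWithinAt (fun σ : ℝ => (σ - tj) • v tj (z tj ω))
              (v tj (z tj ω)) (Ici τ) τ := by
            have h3 := ((hasDerivAt_id τ).sub_const tj).smul_const (v tj (z tj ω))
            simpa using h3.hasDerivWithinAt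
          exact ((hder τ hτ).sub_const _).sub h2
        have hBd : ∀ x : ℝ, HasDerivAt
            (fun τ => (L_v * (1 + Real.exp 1 * (‖v tj (z tj ω)‖ + L_v * h₀))) * ((τ - tj)^2/2))
            ((L_v * (1 + Real.exp 1 * (‖v tj (z tj ω)‖ + L_v * h₀))) * (x - tj)) x := by
          intro x
          have h1 : HasDerivAt (fun τ : ℝ => (τ - tj)^2/2) (x - tj) x := by
            have h2 := (((hasDerivAt_id x).sub_const tj).pow 2).div_const 2
            refine h2.congr_deriv ?_
            simp only [id_eq, Nat.cast_ofNat, pow_one, mul_one]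
            ring
          exact h1.const_mul _
        have hucont : ContinuousOn
            (fun σ => z σ ω - z tj ω - (σ - tj) • v tj (z tj ω)) (Icc tj (tj+h₀)) := by
          apply (hfc.sub continuousOn_const).sub
          exact ((continuous_id.sub continuous_const).smul continuous_const).continuousOn
        have hubound : ∀ τ ∈ Ico tj (tj+h₀), ‖v τ (z τ ω) - v tj (z tj ω)‖
            ≤ (L_v * (1 + Real.exp 1 * (‖v tj (z tj ω)‖ + L_v * h₀))) * (τ - tj) := by
          intro τ hτ
          have hτmem : τ ∈ Icc (0:ℝ) 1 := hsub ⟨hτ.1, hτ.2.le⟩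
          have e1 := hvLipx τ hτmem (z τ ω) (z tj ω)
          have e2 := hvLipt (z tj ω) τ hτmem tj htmem
          have e3 : |τ - tj| = τ - tj := abs_of_nonneg (by linarith [hτ.1])
          have e4 : ‖v τ (z τ ω) - v tj (z tj ω)‖ ≤ ‖v τ (z τ ω) - v τ (z tj ω)‖
              + ‖v τ (z tj ω) - v tj (z tj ω)‖ := by
            calc ‖v τ (z τ ω) - v tj (z tj ω)‖
                = ‖(v τ (z τ ω) - v τ (z tj ω)) + (v τ (z tj ω) - v tj (z tj ω))‖ := by
                  congr 1; abel
              _ ≤ _ := norm_add_le _ _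
          have e5 := hgron' τ ⟨hτ.1, hτ.2.le⟩
          rw [e3] at e2
          nlinarith [mul_le_mul_of_nonneg_left e5 hLv]
        have humvt := image_norm_le_of_norm_deriv_right_le_deriv_boundary hucont hu
          (by simp) hBd hubound (right_mem_Icc.mpr (by linarith))
        calc ‖z (tj + h₀) ω - z tj ω - h₀ • v tj (z tj ω)‖
            = ‖z (tj + h₀) ω - z tj ω - ((tj + h₀) - tj) • v tj (z tj ω)‖ := by
              rw [show tj + h₀ - tj = h₀ by ring]
          _ ≤ (L_v * (1 + Real.exp 1 * (‖v tj (z tj ω)‖ + L_v * h₀))) * (((tj+h₀) - tj)^2/2) :=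
              humvt
          _ = a' + b' * ‖v tj (z tj ω)‖ := by
              rw [ha'def, hb'def, show tj + h₀ - tj = h₀ by ring]; ring
      -- now pass to L²
      have hVmem : MemLp (fun ω => v tj (z tj ω)) 2 P := vmem tj htmem _ (hzmem _ htmem)
      have hUm : MemLp (fun ω => z (tj + h₀) ω - z tj ω - h₀ • v tj (z tj ω)) 2 P := by
        apply MemLp.sub
        · exact (hzmem _ ht'mem).sub (hzmem _ htmem)
        · exact hVmem.const_smul h₀
      obtain ⟨_, hUL2⟩ := L2norm_le_dom hUm.aestronglyMeasurable hVmem ha' hb' hUpt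
      have hVle : L2norm P (fun ω => v tj (z tj ω)) ≤ M_v := by
        have h1 := hMvB j hjlt
        rw [← htj] at h1
        exact h1
      have hUL2' : L2norm P (fun ω => z (tj + h₀) ω - z tj ω - h₀ • v tj (z tj ω))
          ≤ a' + b' * M_v := by
        refine hUL2.trans ?_
        have := mul_le_mul_of_nonneg_left hVle hb'
        linarith
      -- flow-matching term
      have hFMj : L2norm P (fun ω => s (z tj ω) tj h₀ - v tj (z tj ω)) ≤ ε_FM := by
        have h1 := hFM j hjlt
        rw [← htj] at h1
        exact h1
      have hsm : MemLp (fun ω => s (z tj ω) tj h₀) 2 P := by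
        have h1 := smem tj htmem 0 (Nat.zero_le K) _ (hzmem _ htmem)
        simpa using h1
      have hFMm : MemLp (fun ω => s (z tj ω) tj h₀ - v tj (z tj ω)) 2 P :=
        hsm.sub hVmem
      -- split the defect
      have hsplit : (fun ω => z (tj + h₀) ω - z tj ω - h₀ • s (z tj ω) tj h₀)
          = fun ω => (z (tj + h₀) ω - z tj ω - h₀ • v tj (z tj ω))
            + (-h₀) • (s (z tj ω) tj h₀ - v tj (z tj ω)) := by
        funext ω
        module
      constructor
      · rw [hsplit]
        exact hUm.add (hFMm.const_smul (-h₀))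
      · rw [hsplit]
        have htri := L2norm_add_le (X := fun ω => z (tj + h₀) ω - z tj ω - h₀ • v tj (z tj ω))
          (Y := fun ω => (-h₀) • (s (z tj ω) tj h₀ - v tj (z tj ω)))
          hUm (hFMm.const_smul (-h₀))
        have hsm2 : L2norm P (fun ω => (-h₀) • (s (z tj ω) tj h₀ - v tj (z tj ω)))
            = h₀ * L2norm P (fun ω => s (z tj ω) tj h₀ - v tj (z tj ω)) := by
          rw [L2norm_smul, abs_of_nonpos (by linarith), neg_neg]
        rw [hsm2] at htri
        refine htri.trans ?_
        have h2 : h₀ * L2norm P (fun ω => s (z tj ω) tj h₀ - v tj (z tj ω)) ≤ h₀ * ε_FM :=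
          mul_le_mul_of_nonneg_left hFMj h0pos.le
        have h3 : a' + b' * M_v ≤ Real.exp 1 * L_v * h₀^2 * (M_v + 1) := by
          rw [ha'def, hb'def]
          have q0 : (0:ℝ) ≤ L_v * h₀^2 := mul_nonneg hLv (sq_nonneg h₀)
          have q1 : 0 ≤ (Real.exp 1 - 1) * (L_v * h₀^2) := mul_nonneg (by linarith) q0
          have q2 : 0 ≤ Real.exp 1 * (L_v * h₀^2) * (1 - L_v*h₀) :=
            mul_nonneg (mul_nonneg (Real.exp_pos 1).le q0) (by linarith)
          have q3 : 0 ≤ Real.exp 1 * (L_v * h₀^2) * M_v :=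
            mul_nonneg (mul_nonneg (Real.exp_pos 1).le q0) hMv
          nlinarith [q1, q2, q3]
        rw [ha0, hAdef]
        nlinarith [hUL2', h2, h3, mul_pos h0pos h0pos]
    | succ m ih =>
      intro hm1 j hj
      have hm : m ≤ K := by omega
      -- index arithmetic
      have hjA : (2*j+2) * 2^m ≤ 2^K := by
        calc (2*j+2) * 2^m = (j+1) * 2^(m+1) := by ring
          _ ≤ 2^K := hj
      have hjB : (2*j+1) * 2^m ≤ 2^K :=
        le_trans (Nat.mul_le_mul_right _ (by omega)) hjA
      have hjC : (2*j) * 2^m ≤ 2^K :=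
        le_trans (Nat.mul_le_mul_right _ (by omega)) hjA
      obtain ⟨m1, b1⟩ := ih hm (2*j) hjB
      obtain ⟨m2, b2⟩ := ih hm (2*j+1) hjA
      have hsc := hSC m hm1 (2*j) hjA
      -- canonical times
      have E1 : ((((2*j : ℕ)):ℝ) + 1) * ((2:ℝ)^m*h₀)
          = ((2*j : ℕ):ℝ) * ((2:ℝ)^m*h₀) + (2:ℝ)^m*h₀ := by ring
      have E2 : (((2*j+1 : ℕ)):ℝ) * ((2:ℝ)^m*h₀)
          = ((2*j : ℕ):ℝ) * ((2:ℝ)^m*h₀) + (2:ℝ)^m*h₀ := by push_cast; ring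
      have E3 : ((((2*j+1 : ℕ)):ℝ) + 1) * ((2:ℝ)^m*h₀)
          = ((2*j : ℕ):ℝ) * ((2:ℝ)^m*h₀) + (2:ℝ)^m*h₀ + (2:ℝ)^m*h₀ := by push_cast; ring
      have E4 : ((j:ℝ)+1) * ((2:ℝ)^(m+1)*h₀)
          = ((2*j : ℕ):ℝ) * ((2:ℝ)^m*h₀) + (2:ℝ)^m*h₀ + (2:ℝ)^m*h₀ := by push_cast; ring
      have E5 : (j:ℝ) * ((2:ℝ)^(m+1)*h₀) = ((2*j : ℕ):ℝ) * ((2:ℝ)^m*h₀) := by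
        push_cast; ring
      have E6 : (2:ℝ)^(m+1)*h₀ = 2*((2:ℝ)^m*h₀) := by ring
      rw [E1] at m1 b1
      rw [E2, E3] at m2 b2
      rw [E4, E5, E6]
      -- memberships
      have mem0 : ((2*j : ℕ):ℝ) * ((2:ℝ)^m*h₀) ∈ Icc (0:ℝ) 1 := grid_mem' (2*j) m hjC
      have mem1 : ((2*j : ℕ):ℝ) * ((2:ℝ)^m*h₀) + (2:ℝ)^m*h₀ ∈ Icc (0:ℝ) 1 := by
        rw [← E2]; exact grid_mem' (2*j+1) m hjB
      -- MemLp facts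
      have mz0 : MemLp (z (((2*j : ℕ):ℝ) * ((2:ℝ)^m*h₀))) 2 P := hzmem _ mem0
      have mz1 : MemLp (z (((2*j : ℕ):ℝ) * ((2:ℝ)^m*h₀) + (2:ℝ)^m*h₀)) 2 P := hzmem _ mem1
      have ms0 : MemLp (fun ω => s (z (((2*j : ℕ):ℝ) * ((2:ℝ)^m*h₀)) ω)
          (((2*j : ℕ):ℝ) * ((2:ℝ)^m*h₀)) ((2:ℝ)^m*h₀)) 2 P :=
        smem _ mem0 m hm _ mz0
      have mw : MemLp (fun ω => z (((2*j : ℕ):ℝ) * ((2:ℝ)^m*h₀)) ω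
          + ((2:ℝ)^m*h₀) • s (z (((2*j : ℕ):ℝ) * ((2:ℝ)^m*h₀)) ω)
            (((2*j : ℕ):ℝ) * ((2:ℝ)^m*h₀)) ((2:ℝ)^m*h₀)) 2 P := by
        apply MemLp.add mz0
        exact ms0.const_smul ((2:ℝ)^m*h₀)
      have ms1 : MemLp (fun ω => s (z (((2*j : ℕ):ℝ) * ((2:ℝ)^m*h₀) + (2:ℝ)^m*h₀) ω)
          (((2*j : ℕ):ℝ) * ((2:ℝ)^m*h₀) + (2:ℝ)^m*h₀) ((2:ℝ)^m*h₀)) 2 P :=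
        smem _ mem1 m hm _ mz1
      have msw : MemLp (fun ω => s (z (((2*j : ℕ):ℝ) * ((2:ℝ)^m*h₀)) ω
          + ((2:ℝ)^m*h₀) • s (z (((2*j : ℕ):ℝ) * ((2:ℝ)^m*h₀)) ω)
            (((2*j : ℕ):ℝ) * ((2:ℝ)^m*h₀)) ((2:ℝ)^m*h₀))
          (((2*j : ℕ):ℝ) * ((2:ℝ)^m*h₀) + (2:ℝ)^m*h₀) ((2:ℝ)^m*h₀)) 2 P :=
        smem _ mem1 m hm _ mw
      have ms2 : MemLp (fun ω => s (z (((2*j : ℕ):ℝ) * ((2:ℝ)^m*h₀)) ω)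
          (((2*j : ℕ):ℝ) * ((2:ℝ)^m*h₀)) (2*((2:ℝ)^m*h₀))) 2 P := by
        have h1 := smem _ mem0 (m+1) hm1 _ mz0
        rw [E6] at h1
        exact h1
      -- the four pieces
      have mT3 : MemLp (fun ω => ((2:ℝ)^m*h₀) •
          (s (z (((2*j : ℕ):ℝ) * ((2:ℝ)^m*h₀) + (2:ℝ)^m*h₀) ω)
            (((2*j : ℕ):ℝ) * ((2:ℝ)^m*h₀) + (2:ℝ)^m*h₀) ((2:ℝ)^m*h₀)
          - s (z (((2*j : ℕ):ℝ) * ((2:ℝ)^m*h₀)) ω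
              + ((2:ℝ)^m*h₀) • s (z (((2*j : ℕ):ℝ) * ((2:ℝ)^m*h₀)) ω)
                (((2*j : ℕ):ℝ) * ((2:ℝ)^m*h₀)) ((2:ℝ)^m*h₀))
            (((2*j : ℕ):ℝ) * ((2:ℝ)^m*h₀) + (2:ℝ)^m*h₀) ((2:ℝ)^m*h₀))) 2 P :=
        (ms1.sub msw).const_smul ((2:ℝ)^m*h₀)
      have mT4 : MemLp (fun ω => (2*((2:ℝ)^m*h₀)) •
          ((1/2 : ℝ) • s (z (((2*j : ℕ):ℝ) * ((2:ℝ)^m*h₀)) ω)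
              (((2*j : ℕ):ℝ) * ((2:ℝ)^m*h₀)) ((2:ℝ)^m*h₀)
            + (1/2 : ℝ) • s (z (((2*j : ℕ):ℝ) * ((2:ℝ)^m*h₀)) ω
                + ((2:ℝ)^m*h₀) • s (z (((2*j : ℕ):ℝ) * ((2:ℝ)^m*h₀)) ω)
                  (((2*j : ℕ):ℝ) * ((2:ℝ)^m*h₀)) ((2:ℝ)^m*h₀))
              (((2*j : ℕ):ℝ) * ((2:ℝ)^m*h₀) + (2:ℝ)^m*h₀) ((2:ℝ)^m*h₀)
            - s (z (((2*j : ℕ):ℝ) * ((2:ℝ)^m*h₀)) ω)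
              (((2*j : ℕ):ℝ) * ((2:ℝ)^m*h₀)) (2*((2:ℝ)^m*h₀)))) 2 P :=
        (((ms0.const_smul (1/2 : ℝ)).add (msw.const_smul (1/2 : ℝ))).sub ms2).const_smul (2*((2:ℝ)^m*h₀))
      -- splitting identity
      have hsplit : (fun ω => z (((2*j : ℕ):ℝ) * ((2:ℝ)^m*h₀) + (2:ℝ)^m*h₀ + (2:ℝ)^m*h₀) ω
            - z (((2*j : ℕ):ℝ) * ((2:ℝ)^m*h₀)) ω
            - (2*((2:ℝ)^m*h₀)) • s (z (((2*j : ℕ):ℝ) * ((2:ℝ)^m*h₀)) ω)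
              (((2*j : ℕ):ℝ) * ((2:ℝ)^m*h₀)) (2*((2:ℝ)^m*h₀)))
          = fun ω =>
            ((z (((2*j : ℕ):ℝ) * ((2:ℝ)^m*h₀) + (2:ℝ)^m*h₀) ω
              - z (((2*j : ℕ):ℝ) * ((2:ℝ)^m*h₀)) ω
              - ((2:ℝ)^m*h₀) • s (z (((2*j : ℕ):ℝ) * ((2:ℝ)^m*h₀)) ω)
                (((2*j : ℕ):ℝ) * ((2:ℝ)^m*h₀)) ((2:ℝ)^m*h₀))
            + (z (((2*j : ℕ):ℝ) * ((2:ℝ)^m*h₀) + (2:ℝ)^m*h₀ + (2:ℝ)^m*h₀) ω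
              - z (((2*j : ℕ):ℝ) * ((2:ℝ)^m*h₀) + (2:ℝ)^m*h₀) ω
              - ((2:ℝ)^m*h₀) • s (z (((2*j : ℕ):ℝ) * ((2:ℝ)^m*h₀) + (2:ℝ)^m*h₀) ω)
                (((2*j : ℕ):ℝ) * ((2:ℝ)^m*h₀) + (2:ℝ)^m*h₀) ((2:ℝ)^m*h₀))
            + ((2:ℝ)^m*h₀) •
              (s (z (((2*j : ℕ):ℝ) * ((2:ℝ)^m*h₀) + (2:ℝ)^m*h₀) ω)
                (((2*j : ℕ):ℝ) * ((2:ℝ)^m*h₀) + (2:ℝ)^m*h₀) ((2:ℝ)^m*h₀)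
              - s (z (((2*j : ℕ):ℝ) * ((2:ℝ)^m*h₀)) ω
                  + ((2:ℝ)^m*h₀) • s (z (((2*j : ℕ):ℝ) * ((2:ℝ)^m*h₀)) ω)
                    (((2*j : ℕ):ℝ) * ((2:ℝ)^m*h₀)) ((2:ℝ)^m*h₀))
                (((2*j : ℕ):ℝ) * ((2:ℝ)^m*h₀) + (2:ℝ)^m*h₀) ((2:ℝ)^m*h₀)))
            + (2*((2:ℝ)^m*h₀)) •
              ((1/2 : ℝ) • s (z (((2*j : ℕ):ℝ) * ((2:ℝ)^m*h₀)) ω)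
                (((2*j : ℕ):ℝ) * ((2:ℝ)^m*h₀)) ((2:ℝ)^m*h₀)
              + (1/2 : ℝ) • s (z (((2*j : ℕ):ℝ) * ((2:ℝ)^m*h₀)) ω
                  + ((2:ℝ)^m*h₀) • s (z (((2*j : ℕ):ℝ) * ((2:ℝ)^m*h₀)) ω)
                    (((2*j : ℕ):ℝ) * ((2:ℝ)^m*h₀)) ((2:ℝ)^m*h₀))
                (((2*j : ℕ):ℝ) * ((2:ℝ)^m*h₀) + (2:ℝ)^m*h₀) ((2:ℝ)^m*h₀)
              - s (z (((2*j : ℕ):ℝ) * ((2:ℝ)^m*h₀)) ω)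
                (((2*j : ℕ):ℝ) * ((2:ℝ)^m*h₀)) (2*((2:ℝ)^m*h₀))) := by
        funext ω
        module
      constructor
      · rw [hsplit]
        exact ((m1.add m2).add mT3).add mT4
      · rw [hsplit]
        have ppos : (0:ℝ) < (2:ℝ)^m*h₀ := by positivity
        -- bound on T3
        have hT3 : L2norm P (fun ω => ((2:ℝ)^m*h₀) •
            (s (z (((2*j : ℕ):ℝ) * ((2:ℝ)^m*h₀) + (2:ℝ)^m*h₀) ω)
              (((2*j : ℕ):ℝ) * ((2:ℝ)^m*h₀) + (2:ℝ)^m*h₀) ((2:ℝ)^m*h₀)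
            - s (z (((2*j : ℕ):ℝ) * ((2:ℝ)^m*h₀)) ω
                + ((2:ℝ)^m*h₀) • s (z (((2*j : ℕ):ℝ) * ((2:ℝ)^m*h₀)) ω)
                  (((2*j : ℕ):ℝ) * ((2:ℝ)^m*h₀)) ((2:ℝ)^m*h₀))
              (((2*j : ℕ):ℝ) * ((2:ℝ)^m*h₀) + (2:ℝ)^m*h₀) ((2:ℝ)^m*h₀)))
            ≤ ((2:ℝ)^m*h₀) * (L * (((2:ℝ)^m*h₀) * a m)) := by
          rw [L2norm_smul, abs_of_pos ppos]
          apply mul_le_mul_of_nonneg_left _ ppos.le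
          have hdom : ∀ ω, ‖s (z (((2*j : ℕ):ℝ) * ((2:ℝ)^m*h₀) + (2:ℝ)^m*h₀) ω)
              (((2*j : ℕ):ℝ) * ((2:ℝ)^m*h₀) + (2:ℝ)^m*h₀) ((2:ℝ)^m*h₀)
            - s (z (((2*j : ℕ):ℝ) * ((2:ℝ)^m*h₀)) ω
                + ((2:ℝ)^m*h₀) • s (z (((2*j : ℕ):ℝ) * ((2:ℝ)^m*h₀)) ω)
                  (((2*j : ℕ):ℝ) * ((2:ℝ)^m*h₀)) ((2:ℝ)^m*h₀))
              (((2*j : ℕ):ℝ) * ((2:ℝ)^m*h₀) + (2:ℝ)^m*h₀) ((2:ℝ)^m*h₀)‖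
              ≤ 0 + L * ‖z (((2*j : ℕ):ℝ) * ((2:ℝ)^m*h₀) + (2:ℝ)^m*h₀) ω
              - z (((2*j : ℕ):ℝ) * ((2:ℝ)^m*h₀)) ω
              - ((2:ℝ)^m*h₀) • s (z (((2*j : ℕ):ℝ) * ((2:ℝ)^m*h₀)) ω)
                (((2*j : ℕ):ℝ) * ((2:ℝ)^m*h₀)) ((2:ℝ)^m*h₀)‖ := by
            intro ω
            rw [zero_add]
            have h1 := hsLip _ mem1 m hm
              (z (((2*j : ℕ):ℝ) * ((2:ℝ)^m*h₀) + (2:ℝ)^m*h₀) ω)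
              (z (((2*j : ℕ):ℝ) * ((2:ℝ)^m*h₀)) ω
                + ((2:ℝ)^m*h₀) • s (z (((2*j : ℕ):ℝ) * ((2:ℝ)^m*h₀)) ω)
                  (((2*j : ℕ):ℝ) * ((2:ℝ)^m*h₀)) ((2:ℝ)^m*h₀))
            have h2 : z (((2*j : ℕ):ℝ) * ((2:ℝ)^m*h₀) + (2:ℝ)^m*h₀) ω
                - (z (((2*j : ℕ):ℝ) * ((2:ℝ)^m*h₀)) ω
                  + ((2:ℝ)^m*h₀) • s (z (((2*j : ℕ):ℝ) * ((2:ℝ)^m*h₀)) ω)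
                    (((2*j : ℕ):ℝ) * ((2:ℝ)^m*h₀)) ((2:ℝ)^m*h₀))
                = z (((2*j : ℕ):ℝ) * ((2:ℝ)^m*h₀) + (2:ℝ)^m*h₀) ω
                - z (((2*j : ℕ):ℝ) * ((2:ℝ)^m*h₀)) ω
                - ((2:ℝ)^m*h₀) • s (z (((2*j : ℕ):ℝ) * ((2:ℝ)^m*h₀)) ω)
                  (((2*j : ℕ):ℝ) * ((2:ℝ)^m*h₀)) ((2:ℝ)^m*h₀) := by module
            rw [h2] at h1
            exact h1
          obtain ⟨_, hd⟩ := L2norm_le_dom (ms1.sub msw).aestronglyMeasurable m1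
            le_rfl hL.le hdom
          rw [zero_add] at hd
          exact hd.trans (mul_le_mul_of_nonneg_left b1 hL.le)
        -- bound on T4
        have hT4 : L2norm P (fun ω => (2*((2:ℝ)^m*h₀)) •
            ((1/2 : ℝ) • s (z (((2*j : ℕ):ℝ) * ((2:ℝ)^m*h₀)) ω)
                (((2*j : ℕ):ℝ) * ((2:ℝ)^m*h₀)) ((2:ℝ)^m*h₀)
              + (1/2 : ℝ) • s (z (((2*j : ℕ):ℝ) * ((2:ℝ)^m*h₀)) ω
                  + ((2:ℝ)^m*h₀) • s (z (((2*j : ℕ):ℝ) * ((2:ℝ)^m*h₀)) ω)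
                    (((2*j : ℕ):ℝ) * ((2:ℝ)^m*h₀)) ((2:ℝ)^m*h₀))
                (((2*j : ℕ):ℝ) * ((2:ℝ)^m*h₀) + (2:ℝ)^m*h₀) ((2:ℝ)^m*h₀)
              - s (z (((2*j : ℕ):ℝ) * ((2:ℝ)^m*h₀)) ω)
                (((2*j : ℕ):ℝ) * ((2:ℝ)^m*h₀)) (2*((2:ℝ)^m*h₀))))
            ≤ (2*((2:ℝ)^m*h₀)) * ε_SC := by
          rw [L2norm_smul, abs_of_pos (by positivity)]
          exact mul_le_mul_of_nonneg_left hsc (by positivity)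
        refine le_trans (L2norm_add4_le m1 m2 mT3 mT4) ?_
        rw [haS m]
        linarith [b1, b2, hT3, hT4]
  -- bound on a m
  have habound : ∀ m ≤ K, a m ≤ Real.exp (L / 2) * (A + K * ε_SC) := by
    have haux : ∀ m, a m ≤ Real.exp (L * (((2:ℝ)^m - 1) * h₀) / 2) * (A + m * ε_SC) := by
      intro m
      induction m with
      | zero =>
        rw [ha0]
        norm_num
      | succ m ihm =>
        rw [haS m]
        have h2 : 1 + L * ((2:ℝ)^m*h₀)/2 ≤ Real.exp (L * ((2:ℝ)^m*h₀)/2) := by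
          have := Real.add_one_le_exp (L * ((2:ℝ)^m*h₀)/2); linarith
        have h3 : (0:ℝ) ≤ A + m * ε_SC :=
          add_nonneg hA0 (mul_nonneg (Nat.cast_nonneg m) hεSC)
        have h4 : (1 + L * ((2:ℝ)^m*h₀)/2) * a m
            ≤ Real.exp (L*((2:ℝ)^m*h₀)/2) * (Real.exp (L * (((2:ℝ)^m - 1)*h₀)/2) * (A + m*ε_SC)) := by
          apply mul_le_mul h2 ihm (haNN m) (Real.exp_pos _).le
        have h5 : Real.exp (L*((2:ℝ)^m*h₀)/2) * (Real.exp (L * (((2:ℝ)^m - 1)*h₀)/2) * (A + m*ε_SC))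
            = Real.exp (L * (((2:ℝ)^(m+1) - 1)*h₀)/2) * (A + m*ε_SC) := by
          rw [← mul_assoc, ← Real.exp_add]
          congr 2
          ring
        have h6 : (1:ℝ) ≤ Real.exp (L * (((2:ℝ)^(m+1)-1)*h₀)/2) := by
          apply Real.one_le_exp
          have h2m : (1:ℝ) ≤ 2^(m+1) := by exact_mod_cast Nat.one_le_two_pow
          have hq1 : (0:ℝ) ≤ ((2:ℝ)^(m+1)-1)*h₀ := mul_nonneg (by linarith) h0pos.le
          have hq2 : (0:ℝ) ≤ L * (((2:ℝ)^(m+1)-1)*h₀) := mul_nonneg hL.le hq1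
          linarith
        have h7 : Real.exp (L * (((2:ℝ)^(m+1)-1)*h₀)/2) * (A + (m:ℝ)*ε_SC) + ε_SC
            ≤ Real.exp (L * (((2:ℝ)^(m+1)-1)*h₀)/2) * (A + ((m:ℝ)+1)*ε_SC) := by
          have h8 : Real.exp (L * (((2:ℝ)^(m+1)-1)*h₀)/2) * (A + ((m:ℝ)+1)*ε_SC)
              = Real.exp (L * (((2:ℝ)^(m+1)-1)*h₀)/2) * (A + (m:ℝ)*ε_SC)
                + Real.exp (L * (((2:ℝ)^(m+1)-1)*h₀)/2) * ε_SC := by ring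
          rw [h8]
          have := mul_le_mul_of_nonneg_right h6 hεSC
          linarith
        push_cast
        rw [h5] at h4
        linarith
    intro m hm
    refine (haux m).trans ?_
    have h2m1 : (2:ℝ)^m * h₀ ≤ 1 := by
      rw [hh₀, mul_one_div, div_le_one h2K]
      exact pow_le_pow_right₀ (by norm_num) hm
    have h1 : Real.exp (L * (((2:ℝ)^m -1)*h₀)/2) ≤ Real.exp (L/2) := by
      apply Real.exp_le_exp.mpr
      nlinarith [hL.le, h0pos.le]
    have h2 : A + m * ε_SC ≤ A + K * ε_SC := by
      have hc : (m:ℝ) ≤ K := Nat.cast_le.mpr hm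
      nlinarith
    have h3 : (0:ℝ) ≤ A + m*ε_SC :=
      add_nonneg hA0 (mul_nonneg (Nat.cast_nonneg m) hεSC)
    exact mul_le_mul h1 h2 h3 (Real.exp_pos _).le
  -- global error propagation
  have ppos : (0:ℝ) < (2:ℝ)^n*h₀ := by positivity
  have hanb : a n ≤ Real.exp (L/2) * (A + K * ε_SC) := habound n hn
  have habar0 : (0:ℝ) ≤ Real.exp (L/2) * (A + K * ε_SC) :=
    mul_nonneg (Real.exp_pos _).le
      (add_nonneg hA0 (mul_nonneg (Nat.cast_nonneg K) hεSC))
  have hNpow : (2:ℕ)^(K-n) * 2^n = 2^K := by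
    rw [← pow_add, Nat.sub_add_cancel hn]
  have glob : ∀ i : ℕ, i ≤ 2^(K-n) →
      MemLp (fun ω => zhat i ω - z ((i:ℝ)*((2:ℝ)^n*h₀)) ω) 2 P ∧
      L2norm P (fun ω => zhat i ω - z ((i:ℝ)*((2:ℝ)^n*h₀)) ω)
        ≤ Real.exp (L/2) * (A + K * ε_SC)/L * ((1+L*((2:ℝ)^n*h₀))^i - 1) := by
    intro i
    induction i with
    | zero =>
      intro _
      have hfz : (fun ω => zhat 0 ω - z (((0:ℕ):ℝ)*((2:ℝ)^n*h₀)) ω)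
          = fun _ => (0 : EuclideanSpace ℝ (Fin d)) := by
        funext ω
        rw [Nat.cast_zero, zero_mul, hz0 ω]
        simp
      rw [hfz]
      refine ⟨memLp_const 0, ?_⟩
      rw [L2norm_zero]
      simp
    | succ i ihi =>
      intro hi1
      have hi : i < 2^(K-n) := by omega
      obtain ⟨mE, bE⟩ := ihi (by omega)
      have hile : i * 2^n ≤ 2^K := by
        calc i * 2^n ≤ 2^(K-n) * 2^n := Nat.mul_le_mul_right _ hi.le
          _ = 2^K := hNpow
      have hi1le : (i+1) * 2^n ≤ 2^K := by
        calc (i+1) * 2^n ≤ 2^(K-n) * 2^n := Nat.mul_le_mul_right _ hi1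
          _ = 2^K := hNpow
      have memti : (i:ℝ)*((2:ℝ)^n*h₀) ∈ Icc (0:ℝ) 1 := grid_mem' i n hile
      obtain ⟨mD, bD⟩ := key n hn i hi1le
      have mzh : MemLp (zhat i) 2 P := by
        have h1 := mE.add (hzmem _ memti)
        have h2 : ((fun ω => zhat i ω - z ((i:ℝ)*((2:ℝ)^n*h₀)) ω)
            + z ((i:ℝ)*((2:ℝ)^n*h₀))) = zhat i := by
          funext ω; simp only [Pi.add_apply]; abel
        rwa [h2] at h1
      have ms1 : MemLp (fun ω => s (zhat i ω) ((i:ℝ)*((2:ℝ)^n*h₀)) ((2:ℝ)^n*h₀)) 2 P :=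
        smem _ memti n hn _ mzh
      have ms2 : MemLp (fun ω => s (z ((i:ℝ)*((2:ℝ)^n*h₀)) ω)
          ((i:ℝ)*((2:ℝ)^n*h₀)) ((2:ℝ)^n*h₀)) 2 P :=
        smem _ memti n hn _ (hzmem _ memti)
      have mY1 : MemLp (fun ω => (zhat i ω - z ((i:ℝ)*((2:ℝ)^n*h₀)) ω)
          + ((2:ℝ)^n*h₀) • (s (zhat i ω) ((i:ℝ)*((2:ℝ)^n*h₀)) ((2:ℝ)^n*h₀)
            - s (z ((i:ℝ)*((2:ℝ)^n*h₀)) ω) ((i:ℝ)*((2:ℝ)^n*h₀)) ((2:ℝ)^n*h₀))) 2 P :=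
        mE.add ((ms1.sub ms2).const_smul ((2:ℝ)^n*h₀))
      -- rewrite the goal
      have Ei : ((i+1:ℕ):ℝ)*((2:ℝ)^n*h₀) = ((i:ℝ)+1)*((2:ℝ)^n*h₀) := by push_cast; ring
      rw [Ei]
      have hsplit : (fun ω => zhat (i+1) ω - z (((i:ℝ)+1)*((2:ℝ)^n*h₀)) ω)
          = fun ω => ((zhat i ω - z ((i:ℝ)*((2:ℝ)^n*h₀)) ω)
            + ((2:ℝ)^n*h₀) • (s (zhat i ω) ((i:ℝ)*((2:ℝ)^n*h₀)) ((2:ℝ)^n*h₀)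
              - s (z ((i:ℝ)*((2:ℝ)^n*h₀)) ω) ((i:ℝ)*((2:ℝ)^n*h₀)) ((2:ℝ)^n*h₀)))
            + (-1:ℝ) • (z (((i:ℝ)+1)*((2:ℝ)^n*h₀)) ω - z ((i:ℝ)*((2:ℝ)^n*h₀)) ω
              - ((2:ℝ)^n*h₀) • s (z ((i:ℝ)*((2:ℝ)^n*h₀)) ω)
                ((i:ℝ)*((2:ℝ)^n*h₀)) ((2:ℝ)^n*h₀)) := by
        funext ω
        rw [hrec i hi ω]
        module
      rw [hsplit]
      refine ⟨mY1.add (mD.const_smul (-1:ℝ)), ?_⟩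
      have tri := L2norm_add_le
        (X := fun ω => (zhat i ω - z ((i:ℝ)*((2:ℝ)^n*h₀)) ω)
          + ((2:ℝ)^n*h₀) • (s (zhat i ω) ((i:ℝ)*((2:ℝ)^n*h₀)) ((2:ℝ)^n*h₀)
            - s (z ((i:ℝ)*((2:ℝ)^n*h₀)) ω) ((i:ℝ)*((2:ℝ)^n*h₀)) ((2:ℝ)^n*h₀)))
        (Y := fun ω => (-1:ℝ) • (z (((i:ℝ)+1)*((2:ℝ)^n*h₀)) ω - z ((i:ℝ)*((2:ℝ)^n*h₀)) ω
          - ((2:ℝ)^n*h₀) • s (z ((i:ℝ)*((2:ℝ)^n*h₀)) ω)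
            ((i:ℝ)*((2:ℝ)^n*h₀)) ((2:ℝ)^n*h₀)))
        mY1 (mD.const_smul (-1:ℝ))
      -- bound on the first piece
      have hdom : ∀ ω, ‖(zhat i ω - z ((i:ℝ)*((2:ℝ)^n*h₀)) ω)
          + ((2:ℝ)^n*h₀) • (s (zhat i ω) ((i:ℝ)*((2:ℝ)^n*h₀)) ((2:ℝ)^n*h₀)
            - s (z ((i:ℝ)*((2:ℝ)^n*h₀)) ω) ((i:ℝ)*((2:ℝ)^n*h₀)) ((2:ℝ)^n*h₀))‖
          ≤ 0 + (1 + L*((2:ℝ)^n*h₀)) * ‖zhat i ω - z ((i:ℝ)*((2:ℝ)^n*h₀)) ω‖ := by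
        intro ω
        rw [zero_add]
        refine (norm_add_le _ _).trans ?_
        rw [norm_smul, Real.norm_eq_abs, abs_of_pos ppos]
        have h1 := hsLip _ memti n hn (zhat i ω) (z ((i:ℝ)*((2:ℝ)^n*h₀)) ω)
        nlinarith [norm_nonneg (zhat i ω - z ((i:ℝ)*((2:ℝ)^n*h₀)) ω)]
      obtain ⟨_, hd⟩ := L2norm_le_dom mY1.aestronglyMeasurable mE le_rfl
        (by positivity) hdom
      rw [zero_add] at hd
      -- bound on the second piece
      have hD2 : L2norm P (fun ω => (-1:ℝ) • (z (((i:ℝ)+1)*((2:ℝ)^n*h₀)) ω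
          - z ((i:ℝ)*((2:ℝ)^n*h₀)) ω
          - ((2:ℝ)^n*h₀) • s (z ((i:ℝ)*((2:ℝ)^n*h₀)) ω)
            ((i:ℝ)*((2:ℝ)^n*h₀)) ((2:ℝ)^n*h₀)))
          ≤ ((2:ℝ)^n*h₀) * (Real.exp (L/2) * (A + K * ε_SC)) := by
        rw [L2norm_smul]
        norm_num
        refine bD.trans ?_
        exact mul_le_mul_of_nonneg_left hanb ppos.le
      have hE2 : L2norm P (fun ω => zhat i ω - z ((i:ℝ)*((2:ℝ)^n*h₀)) ω)
          ≤ Real.exp (L/2) * (A + K * ε_SC)/L * ((1+L*((2:ℝ)^n*h₀))^i - 1) := bE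
      have hmul : (1 + L*((2:ℝ)^n*h₀)) * L2norm P (fun ω => zhat i ω - z ((i:ℝ)*((2:ℝ)^n*h₀)) ω)
          ≤ (1 + L*((2:ℝ)^n*h₀)) * (Real.exp (L/2) * (A + K * ε_SC)/L * ((1+L*((2:ℝ)^n*h₀))^i - 1)) :=
        mul_le_mul_of_nonneg_left hE2 (by positivity)
      have hfin : (1 + L*((2:ℝ)^n*h₀)) * (Real.exp (L/2) * (A + K * ε_SC)/L * ((1+L*((2:ℝ)^n*h₀))^i - 1))
          + ((2:ℝ)^n*h₀) * (Real.exp (L/2) * (A + K * ε_SC))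
          = Real.exp (L/2) * (A + K * ε_SC)/L * ((1+L*((2:ℝ)^n*h₀))^(i+1) - 1) := by
        have hLne : L ≠ 0 := ne_of_gt hL
        field_simp
        ring
      calc L2norm P _ ≤ _ := tri
        _ ≤ _ := by linarith [hd.trans hmul, hD2]
  -- conclude
  obtain ⟨_, bN⟩ := glob (2^(K-n)) le_rfl
  have hNt : ((2^(K-n) : ℕ):ℝ) * ((2:ℝ)^n*h₀) = 1 := by
    rw [hh₀]
    push_cast
    rw [← mul_assoc, ← pow_add, Nat.sub_add_cancel hn]
    field_simp
  rw [hNt] at bN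
  refine bN.trans ?_
  have hpow : (1+L*((2:ℝ)^n*h₀))^(2^(K-n) : ℕ) ≤ Real.exp L := by
    have h1 : (1+L*((2:ℝ)^n*h₀)) ≤ Real.exp (L*((2:ℝ)^n*h₀)) := by
      have := Real.add_one_le_exp (L*((2:ℝ)^n*h₀)); linarith
    have h2 : (0:ℝ) ≤ 1 + L*((2:ℝ)^n*h₀) := by positivity
    calc (1+L*((2:ℝ)^n*h₀))^(2^(K-n) : ℕ)
        ≤ (Real.exp (L*((2:ℝ)^n*h₀)))^(2^(K-n) : ℕ) := pow_le_pow_left₀ h2 h1 _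
      _ = Real.exp (((2^(K-n) : ℕ):ℝ) * (L*((2:ℝ)^n*h₀))) := (Real.exp_nat_mul _ _).symm
      _ = Real.exp L := by
          congr 1
          calc ((2^(K-n) : ℕ):ℝ) * (L*((2:ℝ)^n*h₀))
              = L * (((2^(K-n) : ℕ):ℝ) * ((2:ℝ)^n*h₀)) := by ring
            _ = L := by rw [hNt]; ring
  have hq : Real.exp (L/2) * (A + K * ε_SC)/L * ((1+L*((2:ℝ)^n*h₀))^(2^(K-n):ℕ) - 1)
      ≤ Real.exp (L/2) * (A + K * ε_SC)/L * Real.exp L := by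
    apply mul_le_mul_of_nonneg_left _ (by positivity)
    linarith [Real.exp_pos L]
  refine hq.trans ?_
  have hfin : Real.exp (L/2) * (A + K * ε_SC)/L * Real.exp L
      = 1 / L * Real.exp (3 * L / 2) * (Real.exp 1 * L_v / 2 ^ K * (M_v + 1) + ε_FM + ε_SC * K) := by
    rw [hAdef, hh₀, show (3*L/2) = L/2 + L from by ring, Real.exp_add]
    field_simp
  rw [hfin]
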